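/- For every n ≥ 0, the leading coefficient of P_{n+1}^(0)(·;ζ) is strictly larger than the leading coefficient of P_n^(1)(·;ζ), i.e. c_{n+1}^(0) > c_n^(1); equivalently, p̃_n := c_n^(1)/c_{n+1}^(0) satisfies 0 < p̃_n < 1. -/

import Mathlib

open MeasureTheory Polynomial

noncomputable def besselK (n : ℕ) (ζ : ℝ) : ℝ :=
  ∫ t in Set.Ioi (0 : ℝ), Real.cosh ((n : ℝ) * t) * Real.exp (-ζ * Real.cosh t)

noncomputable def Gfun (ζ : ℝ) : ℝ := besselK 2 ζ / besselK 1 ζ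

noncomputable def wgt (ℓ : ℕ) (ζ x : ℝ) : ℝ :=
  (x ^ 2 - 1) ^ ((ℓ : ℝ) - 1 / 2) * Real.exp (-ζ * x) / besselK 1 ζ


/-!
Put `r = P₁ₙ` and `q = (x - 1) r`. Since `ω⁽¹⁾ = (x² - 1) ω⁽⁰⁾` and `(x - 1)² < x² - 1` on
`(1, ∞)`, `∫ q² ω⁽⁰⁾ < ∫ r² ω⁽¹⁾ = 1`. On the other hand `q` has degree `n + 1` with top
coefficient `c₁ₙ`, and subtracting `(c₁ₙ / c₀ₙ₊₁) P₀ₙ₊₁` leaves a polynomial of lower degree,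
orthogonal to `P₀ₙ₊₁`; so `∫ q² ω⁽⁰⁾ ≥ (c₁ₙ / c₀ₙ₊₁)²`.
-/

theorem integrable_mul_mul_of_integrable_mul_self {α : Type*} [MeasurableSpace α]
    {μ : Measure α} {f g w : α → ℝ} (hf : AEStronglyMeasurable f μ)
    (hg : AEStronglyMeasurable g μ) (hw : AEStronglyMeasurable w μ) (hw0 : 0 ≤ᵐ[μ] w)
    (hff : Integrable (fun x => f x * f x * w x) μ)
    (hgg : Integrable (fun x => g x * g x * w x) μ) :
    Integrable (fun x => f x * g x * w x) μ := by
  have hbound : Integrable (fun x => (f x * f x * w x + g x * g x * w x) / 2) μ :=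
    (hff.add hgg).div_const 2
  refine hbound.mono' ((hf.mul hg).mul hw) ?_
  filter_upwards [hw0] with x (hx : 0 ≤ w x)
  have hfg : 2 * |f x * g x| ≤ f x * f x + g x * g x := by
    rw [abs_mul]; nlinarith [sq_nonneg (|f x| - |g x|), sq_abs (f x), sq_abs (g x)]
  rw [Real.norm_eq_abs, abs_mul, abs_of_nonneg hx]
  nlinarith [mul_le_mul_of_nonneg_right hfg hx]

theorem integral_pos_of_ae_pos {α : Type*} [MeasurableSpace α] {μ : Measure α} [NeZero μ]
    {f : α → ℝ} (hf : ∀ᵐ x ∂μ, 0 < f x) (hfi : Integrable f μ) : 0 < ∫ x, f x ∂μ := by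
  rw [integral_pos_iff_support_of_nonneg_ae (hf.mono fun _ hx => hx.le) hfi, pos_iff_ne_zero]
  intro h0
  have hzero : ∀ᵐ x ∂μ, f x = 0 := ae_iff.2 h0
  have hfalse : ∀ᵐ _ ∂μ, False := (hf.and hzero).mono fun _ hx => hx.1.ne' hx.2
  exact NeZero.ne μ (ae_eq_bot.1 (Filter.eventually_false_iff_eq_bot.1 hfalse))

theorem Polynomial.ae_eval_ne_zero {μ : Measure ℝ} [NullSingletonClass μ] {r : ℝ[X]}
    (hr : r ≠ 0) : ∀ᵐ x ∂μ, r.eval x ≠ 0 :=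
  measure_mono_null (fun _ hx => not_not.1 hx) ((finite_setOfPred_isRoot hr).measure_zero μ)

namespace Polynomial.Sequence

def IsOrthonormal (S : Sequence ℝ) (μ : Measure ℝ) (w : ℝ → ℝ) : Prop :=
  ∀ m n, ∫ x, (S m).eval x * (S n).eval x * w x ∂μ = if m = n then 1 else 0

variable {μ : Measure ℝ} {w g : ℝ → ℝ} {s : Set ℝ[X]} {r : ℝ[X]}

theorem integrable_eval_mul_mul_of_mem_span
    (h : ∀ p ∈ s, Integrable (fun x => p.eval x * g x * w x) μ) (hr : r ∈ Submodule.span ℝ s) :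
    Integrable (fun x => r.eval x * g x * w x) μ := by
  induction hr using Submodule.span_induction with
  | mem p hp => exact h p hp
  | zero => simp
  | add p q _ _ hp hq => exact (hp.add hq).congr (.of_forall fun x => by simp [add_mul])
  | smul a p _ hp => exact (hp.const_mul a).congr (.of_forall fun x => by simp [mul_assoc])

theorem integral_eval_mul_mul_eq_zero_of_mem_span
    (hint : ∀ p : ℝ[X], Integrable (fun x => p.eval x * g x * w x) μ)
    (h : ∀ p ∈ s, ∫ x, p.eval x * g x * w x ∂μ = 0) (hr : r ∈ Submodule.span ℝ s) :
    ∫ x, r.eval x * g x * w x ∂μ = 0 := by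
  induction hr using Submodule.span_induction with
  | mem p hp => exact h p hp
  | zero => simp
  | add p q _ _ hp hq =>
    have hsplit : ∀ x, (p + q).eval x * g x * w x = p.eval x * g x * w x + q.eval x * g x * w x :=
      fun x => by simp [add_mul]
    simp only [hsplit, integral_add (hint p) (hint q), hp, hq, add_zero]
  | smul a p _ hp =>
    have hsplit : ∀ x, (a • p).eval x * g x * w x = a * (p.eval x * g x * w x) :=
      fun x => by simp [mul_assoc]
    simp only [hsplit, integral_const_mul, hp, mul_zero]

variable {S : Sequence ℝ}

theorem IsOrthonormal.integrable_eval_mul_eval_mul (hS : S.IsOrthonormal μ w)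
    (hw : AEStronglyMeasurable w μ) (hw0 : 0 ≤ᵐ[μ] w) (r q : ℝ[X]) :
    Integrable (fun x => r.eval x * q.eval x * w x) μ := by
  have hspan : ∀ p : ℝ[X], p ∈ Submodule.span ℝ (Set.range S) := by
    simp [S.span fun i => (leadingCoeff_ne_zero.2 (S.ne_zero i)).isUnit]
  have hsq (i : ℕ) : Integrable (fun x => (S i).eval x * (S i).eval x * w x) μ :=
    .of_integral_ne_zero (by simp [hS i i])
  have hpair (i j : ℕ) : Integrable (fun x => (S i).eval x * (S j).eval x * w x) μ :=
    integrable_mul_mul_of_integrable_mul_self (S i).continuous.aestronglyMeasurable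
      (S j).continuous.aestronglyMeasurable hw hw0 (hsq i) (hsq j)
  have hleft (i : ℕ) (p : ℝ[X]) : Integrable (fun x => (S i).eval x * p.eval x * w x) μ :=
    (integrable_eval_mul_mul_of_mem_span (by rintro _ ⟨j, rfl⟩; exact hpair j i)
      (hspan p)).congr (.of_forall fun x => by ring)
  exact integrable_eval_mul_mul_of_mem_span (by rintro _ ⟨i, rfl⟩; exact hleft i q) (hspan r)

theorem IsOrthonormal.integral_eval_mul_eval_mul_eq_zero_of_degree_lt
    (hS : S.IsOrthonormal μ w) (hw : AEStronglyMeasurable w μ) (hw0 : 0 ≤ᵐ[μ] w) {n : ℕ}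
    (hr : r.degree < n) : ∫ x, r.eval x * (S n).eval x * w x ∂μ = 0 := by
  have hmem : r ∈ Submodule.span ℝ (S '' Set.Iio n) := by
    rw [S.span_degreeLT fun i _ => (leadingCoeff_ne_zero.2 (S.ne_zero i)).isUnit]
    exact mem_degreeLT.2 hr
  refine integral_eval_mul_mul_eq_zero_of_mem_span
    (hS.integrable_eval_mul_eval_mul hw hw0 · (S n)) ?_ hmem
  rintro _ ⟨i, hi, rfl⟩
  simpa [(Set.mem_Iio.1 hi).ne] using hS i n

theorem IsOrthonormal.sq_leadingCoeff_div_le_integral (hS : S.IsOrthonormal μ w)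
    (hw : AEStronglyMeasurable w μ) (hw0 : 0 ≤ᵐ[μ] w) (r : ℝ[X]) :
    (r.leadingCoeff / (S r.natDegree).leadingCoeff) ^ 2 ≤ ∫ x, r.eval x * r.eval x * w x ∂μ := by
  set n := r.natDegree
  set c := r.leadingCoeff / (S n).leadingCoeff
  set s := r - C c * S n
  have hs : s.degree < n := by
    rw [degree_lt_iff_coeff_zero]
    intro m hm
    rcases hm.eq_or_lt with rfl | hm
    · have hlc : (S n).coeff n = (S n).leadingCoeff := by
        rw [leadingCoeff, S.natDegree_eq]
      simp [s, c, hlc, n, S.ne_zero]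
    · simp [s, coeff_eq_zero_of_natDegree_lt hm,
        coeff_eq_zero_of_natDegree_lt ((S.natDegree_eq n).trans_lt hm)]
  have hint := hS.integrable_eval_mul_eval_mul hw hw0
  have hexpand (x : ℝ) : r.eval x * r.eval x * w x = c ^ 2 * ((S n).eval x * (S n).eval x * w x)
      + (2 * c * (s.eval x * (S n).eval x * w x) + s.eval x * s.eval x * w x) := by
    simp only [s, eval_sub, eval_mul, eval_C]; ring
  have hss : 0 ≤ ∫ x, s.eval x * s.eval x * w x ∂μ :=
    integral_nonneg_of_ae (hw0.mono fun x hx => mul_nonneg (mul_self_nonneg _) hx)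
  have hcross := ((hint s (S n)).const_mul (2 * c))
  simp only [hexpand]
  rw [integral_add ((hint _ _).const_mul _), integral_add hcross (hint s s), integral_const_mul,
    integral_const_mul, hS n n, if_pos rfl,
    hS.integral_eval_mul_eval_mul_eq_zero_of_degree_lt hw hw0 hs]
  · linarith
  · exact hcross.add (hint s s)

end Polynomial.Sequence

section Weight

variable {ℓ : ℕ} {ζ x : ℝ}

theorem wgt_pos (hK : 0 < besselK 1 ζ) (hx : 1 < x) : 0 < wgt ℓ ζ x := by
  have : 0 < x ^ 2 - 1 := by nlinarith
  unfold wgt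
  positivity

theorem wgt_succ (hx : 1 < x) : wgt (ℓ + 1) ζ x = (x ^ 2 - 1) * wgt ℓ ζ x := by
  have : 0 < x ^ 2 - 1 := by nlinarith
  simp only [wgt, Nat.cast_succ, add_sub_right_comm _ (1 : ℝ), Real.rpow_add this,
    Real.rpow_one]
  ring

theorem besselK_one_pos_of_setIntegral_mul_wgt_pos {f : ℝ → ℝ} (hf : ∀ x, 0 ≤ f x)
    (h : 0 < ∫ x in Set.Ioi 1, f x * wgt ℓ ζ x) : 0 < besselK 1 ζ := by
  by_contra! hK
  refine h.not_ge (setIntegral_nonpos measurableSet_Ioi fun x (hx : 1 < x) => ?_)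
  have : 0 < x ^ 2 - 1 := by nlinarith
  exact mul_nonpos_of_nonneg_of_nonpos (hf x) (div_nonpos_of_nonneg_of_nonpos (by positivity) hK)

theorem integral_wgt_mul_X_sub_one_lt_integral_wgt_succ (hK : 0 < besselK 1 ζ) {r : ℝ[X]}
    (hr : r ≠ 0)
    (hint : Integrable (fun x => (r * (X - C 1)).eval x * (r * (X - C 1)).eval x * wgt ℓ ζ x)
      (volume.restrict (Set.Ioi 1)))
    (hint' : Integrable (fun x => r.eval x * r.eval x * wgt (ℓ + 1) ζ x)
      (volume.restrict (Set.Ioi 1))) :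
    ∫ x in Set.Ioi 1, (r * (X - C 1)).eval x * (r * (X - C 1)).eval x * wgt ℓ ζ x <
      ∫ x in Set.Ioi 1, r.eval x * r.eval x * wgt (ℓ + 1) ζ x := by
  rw [← sub_pos, ← integral_sub hint' hint]
  have : NeZero (volume.restrict (Set.Ioi (1 : ℝ))) := ⟨by simp⟩
  refine integral_pos_of_ae_pos ?_ (hint'.sub hint)
  filter_upwards [ae_restrict_mem measurableSet_Ioi, ae_restrict_of_ae (ae_eval_ne_zero hr)]
    with x (hx : 1 < x) hrx
  have hdiff : r.eval x * r.eval x * wgt (ℓ + 1) ζ x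
      - (r * (X - C 1)).eval x * (r * (X - C 1)).eval x * wgt ℓ ζ x
      = 2 * (x - 1) * (r.eval x * r.eval x) * wgt ℓ ζ x := by
    simp only [wgt_succ hx, eval_mul, eval_sub, eval_X, eval_C]; ring
  rw [hdiff]
  exact mul_pos (mul_pos (by linarith) (mul_self_pos.2 hrx)) (wgt_pos hK hx)

end Weight

theorem stmt13_general
    (ζ : ℝ)
    (P0 P1 : ℕ → Polynomial ℝ) (lc0 lc1 : ℕ → ℝ)
    (hdeg0 : ∀ n, (P0 n).natDegree = n)
    (hdeg1 : ∀ n, (P1 n).natDegree = n)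
    (hlc0 : ∀ n, (P0 n).leadingCoeff = lc0 n)
    (hlc1 : ∀ n, (P1 n).leadingCoeff = lc1 n)
    (hlc0pos : ∀ n, 0 < lc0 n)
    (hlc1pos : ∀ n, 0 < lc1 n)
    (horth0 : ∀ m n, (∫ x in Set.Ioi (1 : ℝ),
        (P0 m).eval x * (P0 n).eval x * wgt 0 ζ x) = if m = n then (1 : ℝ) else 0)
    (horth1 : ∀ m n, (∫ x in Set.Ioi (1 : ℝ),
        (P1 m).eval x * (P1 n).eval x * wgt 1 ζ x) = if m = n then (1 : ℝ) else 0)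
    :
    ∀ n : ℕ, lc1 n < lc0 (n + 1) ∧
      0 < lc1 n / lc0 (n + 1) ∧ lc1 n / lc0 (n + 1) < 1 := by
  intro n
  have hK : 0 < besselK 1 ζ :=
    besselK_one_pos_of_setIntegral_mul_wgt_pos (fun x => mul_self_nonneg ((P0 0).eval x))
      (by rw [horth0 0 0, if_pos rfl]; exact one_pos)
  let S : Sequence ℝ := ⟨P0, fun n => by
    rw [degree_eq_natDegree (leadingCoeff_ne_zero.1 ((hlc0 n).trans_ne (hlc0pos n).ne')),
      hdeg0]⟩
  have hS : S.IsOrthonormal (volume.restrict (Set.Ioi 1)) (wgt 0 ζ) := horth0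
  have hw : AEStronglyMeasurable (wgt 0 ζ) (volume.restrict (Set.Ioi 1)) := by
    unfold wgt; fun_prop
  have hw0 : 0 ≤ᵐ[volume.restrict (Set.Ioi 1)] wgt 0 ζ :=
    (ae_restrict_mem measurableSet_Ioi).mono fun x hx => (wgt_pos hK hx).le
  have hP1 : P1 n ≠ 0 := leadingCoeff_ne_zero.1 ((hlc1 n).trans_ne (hlc1pos n).ne')
  have hdeg : (P1 n * (X - C 1)).natDegree = n + 1 := by
    rw [natDegree_mul hP1 (X_sub_C_ne_zero 1), hdeg1, natDegree_X_sub_C]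
  have hlc : (P1 n * (X - C 1)).leadingCoeff = lc1 n := by
    rw [leadingCoeff_mul, leadingCoeff_X_sub_C, mul_one, hlc1]
  have hlower := hS.sq_leadingCoeff_div_le_integral hw hw0 (P1 n * (X - C 1))
  have hupper := integral_wgt_mul_X_sub_one_lt_integral_wgt_succ hK hP1
    (hS.integrable_eval_mul_eval_mul hw hw0 _ _)
    (.of_integral_ne_zero (by rw [horth1 n n, if_pos rfl]; exact one_ne_zero))
  rw [hlc, hdeg, show (S (n + 1)).leadingCoeff = lc0 (n + 1) from hlc0 _] at hlower
  rw [horth1 n n, if_pos rfl] at hupper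
  have hratio_pos : 0 < lc1 n / lc0 (n + 1) := div_pos (hlc1pos n) (hlc0pos _)
  have hratio : lc1 n / lc0 (n + 1) < 1 :=
    (pow_lt_one_iff_of_nonneg hratio_pos.le two_ne_zero).1 (hlower.trans_lt hupper)
  exact ⟨(div_lt_one (hlc0pos _)).1 hratio, hratio_pos, hratio⟩

theorem stmt13
    (ζ : ℝ) (hζ : 0 < ζ)
    (P0 P1 : ℕ → Polynomial ℝ) (lc0 lc1 : ℕ → ℝ)
    (hdeg0 : ∀ n, (P0 n).natDegree = n)
    (hdeg1 : ∀ n, (P1 n).natDegree = n)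
    (hlc0 : ∀ n, (P0 n).leadingCoeff = lc0 n)
    (hlc1 : ∀ n, (P1 n).leadingCoeff = lc1 n)
    (hlc0pos : ∀ n, 0 < lc0 n)
    (hlc1pos : ∀ n, 0 < lc1 n)
    (horth0 : ∀ m n, (∫ x in Set.Ioi (1 : ℝ),
        (P0 m).eval x * (P0 n).eval x * wgt 0 ζ x) = if m = n then (1 : ℝ) else 0)
    (horth1 : ∀ m n, (∫ x in Set.Ioi (1 : ℝ),
        (P1 m).eval x * (P1 n).eval x * wgt 1 ζ x) = if m = n then (1 : ℝ) else 0)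
    :
    ∀ n : ℕ, lc1 n < lc0 (n + 1) ∧
      0 < lc1 n / lc0 (n + 1) ∧ lc1 n / lc0 (n + 1) < 1 :=
  stmt13_general ζ P0 P1 lc0 lc1 hdeg0 hdeg1 hlc0 hlc1 hlc0pos hlc1pos horth0 horth1
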